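/- arXiv:1305.2039 — 2 statements merged into one kernel-verified Lean document; each statement's English description precedes it below -/
import Mathlib

section
/- The zigzag digraph Z (vertices 00,01,10,11 with edges 00→01, 10→01, 10→11) has a majority polymorphism: the median operation m(x,y,z) = (x∧y)∨(x∧z)∨(y∧z), where ∧ and ∨ are taken with respect to the linear order 00 < 10 < 01 < 11, is a ternary polymorphism of Z satisfying m(x,x,y)=m(x,y,x)=m(y,x,x)=x for all x,y. -/
/-- The zigzag Z: vertices 0 = 00, 1 = 10, 2 = 01, 3 = 11 (so the Fin-order is
    00 < 10 < 01 < 11), edges 00→01, 10→01, 10→11. -/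
def zigzagE1 : Fin 4 → Fin 4 → Prop := fun a b =>
  (a = 0 ∧ b = 2) ∨ (a = 1 ∧ b = 2) ∨ (a = 1 ∧ b = 3)

/-- The median operation m(x,y,z) = (x∧y)∨(x∧z)∨(y∧z) w.r.t. the order 00<10<01<11. -/
def med (x y z : Fin 4) : Fin 4 := max (max (min x y) (min x z)) (min y z)

theorem stmt1 :
    (∀ a1 a2 a3 b1 b2 b3 : Fin 4, zigzagE1 a1 b1 → zigzagE1 a2 b2 → zigzagE1 a3 b3 →
      zigzagE1 (med a1 a2 a3) (med b1 b2 b3)) ∧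
    (∀ x y : Fin 4, med x x y = x ∧ med x y x = x ∧ med y x x = x) := by
  constructor
  · intro a1 a2 a3 b1 b2 b3 h1 h2 h3
    rcases h1 with ⟨rfl, rfl⟩ | ⟨rfl, rfl⟩ | ⟨rfl, rfl⟩ <;>
      rcases h2 with ⟨rfl, rfl⟩ | ⟨rfl, rfl⟩ | ⟨rfl, rfl⟩ <;>
      rcases h3 with ⟨rfl, rfl⟩ | ⟨rfl, rfl⟩ | ⟨rfl, rfl⟩ <;> (unfold zigzagE1 med; decide)
  · decide
end

section
/- For subsets I, J of [k] = {1,…,k}, there exists a digraph homomorphism from the oriented path Q_I to the oriented path Q_J if and only if I ⊆ J. Here Q_I is the oriented path formed by concatenating a single forward edge, then for each l=1,…,k a single forward edge if l∈I and a zigzag •→•←•→• if l∉I, then a final single forward edge. -/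
/-
Assign to every vertex of `Q_I` its level (its height above the initial vertex); every
edge raises the level by one. A homomorphism fixing the initial vertex therefore preserves the
levels of the junction vertices. For `l ∈ I`, the single edge of `Q_I` between the junctions of
levels `l + 1` and `l + 2` goes to an edge of `Q_J` starting at level `l + 1`, whose tail has an
incoming and whose head has an outgoing edge. Inside a zigzag the vertex `z(l, 1)` is a source and
`z(l, 0)` a sink, so this edge is the single edge of `Q_J` at `l`, i.e. `l ∈ J`. Conversely, for
`I ⊆ J`, folding every zigzag of `Q_I` at `l ∈ J` onto a single edge gives the homomorphism.
-/

/-- Vertices of the oriented path Q_I: junction vertices j_0, …, j_{k+2}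
    (`Sum.inl`), plus two internal zigzag vertices for each l ∉ I (`Sum.inr`). -/
def QV7 (k : ℕ) (I : Finset (Fin k)) : Type :=
  Fin (k + 3) ⊕ ({l : Fin k // l ∉ I} × Fin 2)

/-- Edges of Q_I: an initial edge j_0→j_1, a final edge j_{k+1}→j_{k+2},
    a single edge j_{l+1}→j_{l+2} for each l ∈ I, and a zigzag
    j_{l+1}→z(l,0)←z(l,1)→j_{l+2} for each l ∉ I. -/
def QE7 (k : ℕ) (I : Finset (Fin k)) : QV7 k I → QV7 k I → Prop := fun x y =>
  (x = Sum.inl ⟨0, by omega⟩ ∧ y = Sum.inl ⟨1, by omega⟩) ∨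
  (x = Sum.inl ⟨k + 1, by omega⟩ ∧ y = Sum.inl ⟨k + 2, by omega⟩) ∨
  (∃ l : Fin k, l ∈ I ∧
    x = Sum.inl ⟨l.1 + 1, by have := l.isLt; omega⟩ ∧
    y = Sum.inl ⟨l.1 + 2, by have := l.isLt; omega⟩) ∨
  (∃ z : {l : Fin k // l ∉ I},
    (x = Sum.inl ⟨z.1.1 + 1, by have := z.1.isLt; omega⟩ ∧ y = Sum.inr (z, 0)) ∨
    (x = Sum.inr (z, 1) ∧ y = Sum.inr (z, 0)) ∨
    (x = Sum.inr (z, 1) ∧ y = Sum.inl ⟨z.1.1 + 2, by have := z.1.isLt; omega⟩))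

namespace QV7

variable {k : ℕ} {I J : Finset (Fin k)}

/-- The zigzag vertices `z(l, 0)` and `z(l, 1)` sit at levels `l + 2` and `l + 1`. -/
def level : QV7 k I → ℕ :=
  Sum.elim (fun i => i.1) (fun p => p.1.1.1 + 2 - p.2.1)

@[simp]
theorem level_inl (i : Fin (k + 3)) : level (Sum.inl i : QV7 k I) = i := rfl

theorem level_of_edge {x y : QV7 k I} (h : QE7 k I x y) : level y = level x + 1 := by
  rcases h with ⟨rfl, rfl⟩ | ⟨rfl, rfl⟩ | ⟨l, -, rfl, rfl⟩ |
      ⟨z, ⟨rfl, rfl⟩ | ⟨rfl, rfl⟩ | ⟨rfl, rfl⟩⟩ <;> simp [level]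

theorem not_edge_from_zigzag_sink (z : {l : Fin k // l ∉ I}) (y : QV7 k I) :
    ¬ QE7 k I (Sum.inr (z, 0)) y := by
  rintro (⟨h, -⟩ | ⟨h, -⟩ | ⟨l, -, h, -⟩ | ⟨w, ⟨h, -⟩ | ⟨h, -⟩ | ⟨h, -⟩⟩) <;> cases h

theorem not_edge_to_zigzag_source (z : {l : Fin k // l ∉ I}) (x : QV7 k I) :
    ¬ QE7 k I x (Sum.inr (z, 1)) := by
  rintro (⟨-, h⟩ | ⟨-, h⟩ | ⟨l, -, -, h⟩ | ⟨w, ⟨-, h⟩ | ⟨-, h⟩ | ⟨-, h⟩⟩) <;> cases h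

theorem apply_junction_succ {f : QV7 k I → ℕ} (hf : ∀ x y, QE7 k I x y → f y = f x + 1)
    (i : Fin (k + 2)) : f (Sum.inl i.succ) = f (Sum.inl i.castSucc) + 1 := by
  obtain ⟨_ | i, hi⟩ := i
  · exact hf _ _ (Or.inl ⟨rfl, rfl⟩)
  obtain hik | rfl : i < k ∨ i = k := by omega
  · let l : Fin k := ⟨i, hik⟩
    by_cases hl : l ∈ I
    · exact hf _ _ (Or.inr (Or.inr (Or.inl ⟨l, hl, rfl, rfl⟩)))
    · let z : {l : Fin k // l ∉ I} := ⟨l, hl⟩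
      have up : f (Sum.inr (z, 0)) = f (Sum.inl ⟨i + 1, by omega⟩) + 1 :=
        hf _ _ (Or.inr (Or.inr (Or.inr ⟨z, Or.inl ⟨rfl, rfl⟩⟩)))
      have down : f (Sum.inr (z, 0)) = f (Sum.inr (z, 1)) + 1 :=
        hf _ _ (Or.inr (Or.inr (Or.inr ⟨z, Or.inr (Or.inl ⟨rfl, rfl⟩)⟩)))
      have up' : f (Sum.inl ⟨i + 2, by omega⟩) = f (Sum.inr (z, 1)) + 1 :=
        hf _ _ (Or.inr (Or.inr (Or.inr ⟨z, Or.inr (Or.inr ⟨rfl, rfl⟩)⟩)))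
      change f (Sum.inl ⟨i + 2, _⟩) = f (Sum.inl ⟨i + 1, _⟩) + 1
      omega
  · exact hf _ _ (Or.inr (Or.inl ⟨rfl, rfl⟩))

theorem apply_junction {f : QV7 k I → ℕ} (hf : ∀ x y, QE7 k I x y → f y = f x + 1)
    (i : Fin (k + 3)) : f (Sum.inl i) = f (Sum.inl 0) + i := by
  induction i using Fin.induction with
  | zero => rfl
  | succ i ih => rw [apply_junction_succ hf, ih]; simp [add_assoc]

theorem exists_edge_from_junction (I : Finset (Fin k)) (i : Fin (k + 2)) :
    ∃ y, QE7 k I (Sum.inl i.castSucc) y := by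
  obtain ⟨_ | i, hi⟩ := i
  · exact ⟨_, Or.inl ⟨rfl, rfl⟩⟩
  obtain hik | rfl : i < k ∨ i = k := by omega
  · let l : Fin k := ⟨i, hik⟩
    by_cases hl : l ∈ I
    · exact ⟨_, Or.inr (Or.inr (Or.inl ⟨l, hl, rfl, rfl⟩))⟩
    · exact ⟨_, Or.inr (Or.inr (Or.inr ⟨⟨l, hl⟩, Or.inl ⟨rfl, rfl⟩⟩))⟩
  · exact ⟨_, Or.inr (Or.inl ⟨rfl, rfl⟩)⟩

theorem exists_edge_to_junction (I : Finset (Fin k)) (i : Fin (k + 2)) :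
    ∃ x, QE7 k I x (Sum.inl i.succ) := by
  obtain ⟨_ | i, hi⟩ := i
  · exact ⟨_, Or.inl ⟨rfl, rfl⟩⟩
  obtain hik | rfl : i < k ∨ i = k := by omega
  · let l : Fin k := ⟨i, hik⟩
    by_cases hl : l ∈ I
    · exact ⟨_, Or.inr (Or.inr (Or.inl ⟨l, hl, rfl, rfl⟩))⟩
    · exact ⟨_, Or.inr (Or.inr (Or.inr ⟨⟨l, hl⟩, Or.inr (Or.inr ⟨rfl, rfl⟩)⟩))⟩
  · exact ⟨_, Or.inr (Or.inl ⟨rfl, rfl⟩)⟩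

theorem level_apply_junction {φ : QV7 k I → QV7 k J}
    (hφ : ∀ x y, QE7 k I x y → QE7 k J (φ x) (φ y)) (h0 : φ (Sum.inl 0) = Sum.inl 0)
    (i : Fin (k + 3)) : level (φ (Sum.inl i)) = i := by
  simpa [h0] using
    apply_junction (f := fun x => level (φ x)) (fun x y hxy => level_of_edge (hφ x y hxy)) i

theorem mem_of_edge_of_level_eq {x y : QV7 k J} (h : QE7 k J x y) {l : Fin k}
    (hx : level x = l + 1) (hin : ∃ w, QE7 k J w x) (hout : ∃ u, QE7 k J y u) : l ∈ J := by
  rcases h with ⟨rfl, rfl⟩ | ⟨rfl, rfl⟩ | ⟨l', hl', rfl, rfl⟩ |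
      ⟨z, ⟨rfl, rfl⟩ | ⟨rfl, rfl⟩ | ⟨rfl, rfl⟩⟩
  · simp at hx
  · simp only [level_inl] at hx
    omega
  · rwa [← Fin.ext (by simpa using hx : l'.1 = l.1)]
  · obtain ⟨u, hu⟩ := hout
    exact absurd hu (not_edge_from_zigzag_sink z u)
  all_goals
    obtain ⟨w, hw⟩ := hin
    exact absurd hw (not_edge_to_zigzag_source z w)

/-- Collapses each zigzag of `Q_I` at some `l ∈ J` onto the junctions of the same levels. -/
def fold (J : Finset (Fin k)) : QV7 k I → QV7 k J :=
  Sum.elim Sum.inl fun p =>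
    if hJ : p.1.1 ∈ J then Sum.inl ⟨p.1.1.1 + 2 - p.2.1, by have := p.1.1.isLt; omega⟩
    else Sum.inr (⟨p.1.1, hJ⟩, p.2)

theorem fold_inl (i : Fin (k + 3)) : fold J (Sum.inl i : QV7 k I) = Sum.inl i := rfl

theorem fold_zigzag_of_mem {z : {l : Fin k // l ∉ I}} (hJ : z.1 ∈ J) (e : Fin 2) :
    fold J (Sum.inr (z, e)) = Sum.inl ⟨z.1.1 + 2 - e, by have := z.1.isLt; omega⟩ :=
  dif_pos hJ

theorem fold_zigzag_of_not_mem {z : {l : Fin k // l ∉ I}} (hJ : z.1 ∉ J) (e : Fin 2) :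
    fold J (Sum.inr (z, e)) = Sum.inr (⟨z.1, hJ⟩, e) :=
  dif_neg hJ

theorem fold_hom (hIJ : I ⊆ J) (x y : QV7 k I) (h : QE7 k I x y) :
    QE7 k J (fold J x) (fold J y) := by
  rcases h with ⟨rfl, rfl⟩ | ⟨rfl, rfl⟩ | ⟨l, hl, rfl, rfl⟩ |
      ⟨z, ⟨rfl, rfl⟩ | ⟨rfl, rfl⟩ | ⟨rfl, rfl⟩⟩
  · exact Or.inl ⟨rfl, rfl⟩
  · exact Or.inr (Or.inl ⟨rfl, rfl⟩)
  · exact Or.inr (Or.inr (Or.inl ⟨l, hIJ hl, rfl, rfl⟩))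
  · by_cases hJ : z.1 ∈ J
    · rw [fold_inl, fold_zigzag_of_mem hJ]
      exact Or.inr (Or.inr (Or.inl ⟨z.1, hJ, rfl, rfl⟩))
    · rw [fold_inl, fold_zigzag_of_not_mem hJ]
      exact Or.inr (Or.inr (Or.inr ⟨⟨z.1, hJ⟩, Or.inl ⟨rfl, rfl⟩⟩))
  · by_cases hJ : z.1 ∈ J
    · rw [fold_zigzag_of_mem hJ, fold_zigzag_of_mem hJ]
      exact Or.inr (Or.inr (Or.inl ⟨z.1, hJ, rfl, rfl⟩))
    · rw [fold_zigzag_of_not_mem hJ, fold_zigzag_of_not_mem hJ]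
      exact Or.inr (Or.inr (Or.inr ⟨⟨z.1, hJ⟩, Or.inr (Or.inl ⟨rfl, rfl⟩)⟩))
  · by_cases hJ : z.1 ∈ J
    · rw [fold_inl, fold_zigzag_of_mem hJ]
      exact Or.inr (Or.inr (Or.inl ⟨z.1, hJ, rfl, rfl⟩))
    · rw [fold_inl, fold_zigzag_of_not_mem hJ]
      exact Or.inr (Or.inr (Or.inr ⟨⟨z.1, hJ⟩, Or.inr (Or.inr ⟨rfl, rfl⟩)⟩))

end QV7

/-- There is a homomorphism Q_I → Q_J sending initial vertex to initial vertex
    and terminal vertex to terminal vertex if and only if I ⊆ J. -/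
theorem stmt7 (k : ℕ) (I J : Finset (Fin k)) :
    (∃ φ : QV7 k I → QV7 k J,
      (∀ x y, QE7 k I x y → QE7 k J (φ x) (φ y)) ∧
      φ (Sum.inl 0) = Sum.inl 0 ∧
      φ (Sum.inl (Fin.last (k + 2))) = Sum.inl (Fin.last (k + 2))) ↔ I ⊆ J := by
  constructor
  · rintro ⟨φ, hφ, h0, -⟩ l hl
    obtain ⟨_, hin⟩ := QV7.exists_edge_to_junction I ⟨l, by omega⟩
    obtain ⟨_, hout⟩ := QV7.exists_edge_from_junction I ⟨l + 2, by omega⟩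
    exact QV7.mem_of_edge_of_level_eq (hφ _ _ (Or.inr (Or.inr (Or.inl ⟨l, hl, rfl, rfl⟩))))
      (QV7.level_apply_junction hφ h0 _) ⟨_, hφ _ _ hin⟩ ⟨_, hφ _ _ hout⟩
  · exact fun hIJ => ⟨QV7.fold J, QV7.fold_hom hIJ, rfl, rfl⟩
end
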